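/- Fix integers e ≥ 2, k ≥ 1, and m > 3. The number of integers x with 0 ≤ x < 3^k such that S_{e,3}(x) = m equals Σ_{j=0}^{⌊m/2^e⌋} C(k, j) · C(k − j, m − j·2^e), where C denotes the binomial coefficient (with C(a, c) = 0 when c > a, and k − j interpreted as 0 when j > k). -/

import Mathlib

/-- The `e`-power base-`b` happy function: the sum of the `e`-th powers of the
base-`b` digits of `n`. -/
def S (e b n : ℕ) : ℕ := ((Nat.digits b n).map (· ^ e)).sum

/-!
Stripping the last digit, `S e b (b * q + r) = r ^ e + S e b q`, so the generating polynomial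
`∑_{x < b^k} X ^ S e b x` equals `(∑_{r < b} X ^ (r ^ e)) ^ k`; for `e ≠ 0` the zero digits padding
`x` to `k` digits contribute `0 ^ e = 0`. For `b = 3` this is `(X ^ 2 ^ e + (1 + X)) ^ k`, and
expanding it by the binomial theorem twice gives the coefficient of `X ^ m`: `j` digits equal to
`2` and `m - j * 2 ^ e` digits equal to `1`.
-/

open Finset Polynomial

theorem sum_range_mul_eq_sum_sum {M : Type*} [AddCommMonoid M] (f : ℕ → M) (m n : ℕ) :
    ∑ x ∈ range (m * n), f x = ∑ q ∈ range m, ∑ r ∈ range n, f (n * q + r) := by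
  induction m with
  | zero => simp
  | succ m ih => rw [add_mul, one_mul, sum_range_add, ih, sum_range_succ, mul_comm n m]

theorem sum_range_eq_sum_range_of_eq_zero {M : Type*} [AddCommMonoid M] {f : ℕ → M} {a b : ℕ}
    (ha : ∀ j ≥ a, f j = 0) (hb : ∀ j ≥ b, f j = 0) :
    ∑ j ∈ range a, f j = ∑ j ∈ range b, f j := by
  wlog hab : a ≤ b generalizing a b
  · exact (this hb ha (le_of_not_ge hab)).symm
  exact sum_subset (range_subset_range.2 hab) fun j _ hj => ha j (by simpa using hj)

theorem card_filter_eq_coeff_sum_X_pow {ι : Type*} (s : Finset ι) (g : ι → ℕ) (m : ℕ) :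
    #{x ∈ s | g x = m} = (∑ x ∈ s, (X : ℕ[X]) ^ g x).coeff m := by
  simp only [card_filter, finsetSum_coeff, coeff_X_pow, eq_comm]

theorem S_mul_add {e b : ℕ} (he : e ≠ 0) (hb : 1 < b) (q : ℕ) {r : ℕ} (hr : r < b) :
    S e b (b * q + r) = r ^ e + S e b q := by
  rcases eq_or_ne r 0 with rfl | hr0
  · rcases eq_or_ne q 0 with rfl | hq0
    · simp [S, he]
    · rw [add_comm, S, Nat.digits_add b hb 0 q hr (Or.inr hq0)]
      simp [S, he]
  · rw [add_comm, S, Nat.digits_add b hb r q hr (Or.inl hr0)]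
    simp [S]

theorem sum_range_pow_X_pow_S {e b : ℕ} (he : e ≠ 0) (hb : 1 < b) (k : ℕ) :
    ∑ x ∈ range (b ^ k), (X : ℕ[X]) ^ S e b x = (∑ r ∈ range b, X ^ r ^ e) ^ k := by
  induction k with
  | zero => simp [S]
  | succ k ih =>
    calc ∑ x ∈ range (b ^ k * b), (X : ℕ[X]) ^ S e b x
        = ∑ q ∈ range (b ^ k), ∑ r ∈ range b, X ^ S e b (b * q + r) := sum_range_mul_eq_sum_sum ..
      _ = ∑ q ∈ range (b ^ k), X ^ S e b q * ∑ r ∈ range b, X ^ r ^ e := by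
        refine sum_congr rfl fun q _ => ?_
        rw [mul_sum]
        exact sum_congr rfl fun r hr => by rw [S_mul_add he hb q (mem_range.1 hr), pow_add, mul_comm]
      _ = (∑ r ∈ range b, X ^ r ^ e) ^ (k + 1) := by rw [← sum_mul, ih, pow_succ]

theorem coeff_X_pow_add_one_add_X_pow {c : ℕ} (hc : 0 < c) (k m : ℕ) :
    ((X ^ c + (1 + X) : ℕ[X]) ^ k).coeff m =
      ∑ j ∈ range (m / c + 1), k.choose j * (k - j).choose (m - j * c) := by
  rw [add_pow, finsetSum_coeff]
  simp only [coeff_mul_natCast, ← pow_mul, coeff_X_pow_mul', coeff_one_add_X_pow, Nat.cast_id]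
  rw [sum_range_eq_sum_range_of_eq_zero (b := m / c + 1)]
  · refine sum_congr rfl fun j hj => ?_
    have hjc : c * j ≤ m := by
      rw [mul_comm]
      exact (Nat.le_div_iff_mul_le hc).1 (Nat.lt_succ_iff.1 (mem_range.1 hj))
    rw [if_pos hjc, mul_comm, mul_comm c]
  · intro j hj
    rw [Nat.choose_eq_zero_of_lt (show k < j by omega), mul_zero]
  · intro j hj
    have hjc : m < j * c := (Nat.div_lt_iff_lt_mul hc).1 hj
    rw [if_neg (by rw [mul_comm]; omega), zero_mul]

theorem stmt_5_general (e k m : ℕ) (he : 2 ≤ e) :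
    ((Finset.range (3 ^ k)).filter (fun x => S e 3 x = m)).card =
      ∑ j ∈ Finset.range (m / 2 ^ e + 1),
        Nat.choose k j * Nat.choose (k - j) (m - j * 2 ^ e) := by
  have he₀ : e ≠ 0 := by omega
  have h_digits : ∑ r ∈ range 3, (X : ℕ[X]) ^ r ^ e = X ^ 2 ^ e + (1 + X) := by
    simp only [sum_range_succ, range_one, sum_singleton, ne_eq, he₀, not_false_eq_true, zero_pow,
      pow_zero, one_pow, pow_one]
    ring
  rw [card_filter_eq_coeff_sum_X_pow, sum_range_pow_X_pow_S he₀ (by norm_num), h_digits,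
    coeff_X_pow_add_one_add_X_pow (by positivity)]

theorem stmt_5 (e k m : ℕ) (he : 2 ≤ e) (hk : 1 ≤ k) (hm : 3 < m) :
    ((Finset.range (3 ^ k)).filter (fun x => S e 3 x = m)).card =
      ∑ j ∈ Finset.range (m / 2 ^ e + 1),
        Nat.choose k j * Nat.choose (k - j) (m - j * 2 ^ e) :=
  stmt_5_general e k m he
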